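/- Let q : ℝ^{D₁} × ⋯ × ℝ^{D_n} → ℝ be concave, differentiable, with block-Lipschitz gradient constants Lᵢ, attaining maximum q*. Consider the randomized block-coordinate ascent: at each iteration t, a block iₜ is chosen uniformly at random and Λ_{iₜ}(t+1) = Λ_{iₜ}(t) + (1/L_{iₜ})∇_{iₜ}q(Λ(t)), other blocks unchanged. Then the expected optimality gap satisfies E[q* - q(Λ(t+1)) | Λ(t)] ≤ q* - q(Λ(t)) - (1/(2n)) Σᵢ (1/Lᵢ)‖∇_i q(Λ(t))‖², i.e., each step decreases the expected gap by at least (1/(2n)) times the weighted squared gradient norm. -/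

import Mathlib

/-!
Along the block step `v = (1/Lᵢ) ∇ᵢq(Λ) eᵢ`, the block-Lipschitz bound makes the directional
derivative `t ↦ ⟪∇q(Λ + t v), v⟫` drop by at most `Lᵢ t ‖v‖²`, so `q` increases by at least
`⟪∇q(Λ), v⟫ - Lᵢ‖v‖²/2 = ‖∇ᵢq(Λ)‖² / (2Lᵢ)`. Averaging this over the uniformly chosen block gives
the expected decrease of the gap.
-/

open scoped RealInnerProductSpace
open Set

theorem le_of_hasDerivAt_of_sub_le {g g' : ℝ → ℝ} {K : ℝ} (hg : ∀ t, HasDerivAt g (g' t) t)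
    (hg' : ∀ t ∈ Icc (0 : ℝ) 1, g' 0 - K * t ≤ g' t) :
    g 0 + g' 0 - K / 2 ≤ g 1 := by
  set φ : ℝ → ℝ := fun t => g t - g' 0 * t + K / 2 * t ^ 2
  have hφ : ∀ t, HasDerivAt φ (g' t - g' 0 + K * t) t := fun t => by
    refine (((hg t).sub ((hasDerivAt_id t).const_mul (g' 0))).add
      (((hasDerivAt_id t).pow 2).const_mul (K / 2))).congr_deriv ?_
    simp only [id, Nat.cast_ofNat]
    ring
  have hmono : MonotoneOn φ (Icc 0 1) :=
    monotoneOn_of_hasDerivWithinAt_nonneg (convex_Icc 0 1)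
      (fun t _ => (hφ t).continuousAt.continuousWithinAt)
      (fun t _ => (hφ t).hasDerivWithinAt)
      (fun t ht => by linarith [hg' t (interior_subset ht)])
  have h01 := hmono (left_mem_Icc.2 zero_le_one) (right_mem_Icc.2 zero_le_one) zero_le_one
  simp only [φ] at h01
  linarith

theorem add_inner_gradient_sub_le_of_inner_gradient_ge {E : Type*} [NormedAddCommGroup E]
    [InnerProductSpace ℝ E] [CompleteSpace E] {q : E → ℝ} (hq : Differentiable ℝ q) (x v : E)
    {K : ℝ} (h : ∀ t ∈ Icc (0 : ℝ) 1, ⟪gradient q x, v⟫ - K * t ≤ ⟪gradient q (x + t • v), v⟫) :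
    q x + ⟪gradient q x, v⟫ - K / 2 ≤ q (x + v) := by
  have hline : ∀ t : ℝ, HasDerivAt (fun t : ℝ => q (x + t • v)) ⟪gradient q (x + t • v), v⟫ t := by
    intro t
    have hpath : HasDerivAt (fun t : ℝ => x + t • v) v t := by
      simpa using ((hasDerivAt_id t).smul_const v).const_add x
    have hcomp := (hq (x + t • v)).hasFDerivAt.comp_hasDerivAt t hpath
    rwa [(hq (x + t • v)).hasGradientAt.fderiv_apply] at hcomp
  simpa using le_of_hasDerivAt_of_sub_le hline (by simpa using h)

namespace PiLp

theorem single_smul {ι 𝕜 : Type*} [DecidableEq ι] [Monoid 𝕜] (p : ENNReal) {β : ι → Type*}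
    [∀ i, AddMonoid (β i)] [∀ i, DistribMulAction 𝕜 (β i)] (i : ι) (c : 𝕜) (a : β i) :
    single p i (c • a) = c • single p i a := by
  rw [← toLp_single, Pi.single_smul, WithLp.toLp_smul, toLp_single]

variable {ι : Type*} [Fintype ι] [DecidableEq ι] {E : ι → Type*}
  [∀ i, NormedAddCommGroup (E i)] [∀ i, InnerProductSpace ℝ (E i)]

theorem inner_single_right (x : PiLp 2 E) (i : ι) (a : E i) : ⟪x, single 2 i a⟫ = ⟪x i, a⟫ := by
  rw [PiLp.inner_apply, Fintype.sum_eq_single i fun j hj => by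
    rw [single_eq_of_ne 2 hj, inner_zero_right], single_eq_same]

theorem add_norm_sq_div_le_apply_add_single_gradient [∀ i, CompleteSpace (E i)]
    {q : PiLp 2 E → ℝ} (hq : Differentiable ℝ q) {i : ι} {L : ℝ} (hL : 0 < L)
    (hblock : ∀ (Λ : PiLp 2 E) (δ : E i),
      ‖gradient q (Λ + single 2 i δ) i - gradient q Λ i‖ ≤ L * ‖δ‖)
    (Λ : PiLp 2 E) :
    q Λ + ‖gradient q Λ i‖ ^ 2 / (2 * L) ≤ q (Λ + single 2 i ((1 / L) • gradient q Λ i)) := by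
  set δ := (1 / L) • gradient q Λ i
  have hslope : ∀ t ∈ Icc (0 : ℝ) 1, ⟪gradient q Λ, single 2 i δ⟫ - L * ‖δ‖ ^ 2 * t ≤
      ⟪gradient q (Λ + t • single 2 i δ), single 2 i δ⟫ := by
    intro t ht
    have hlip := hblock Λ (t • δ)
    rw [single_smul, norm_smul, Real.norm_of_nonneg ht.1] at hlip
    have hcs := real_inner_le_norm (gradient q Λ i - gradient q (Λ + t • single 2 i δ) i) δ
    rw [← norm_neg, neg_sub, inner_sub_left] at hcs
    rw [inner_single_right, inner_single_right]
    nlinarith [mul_le_mul_of_nonneg_right hlip (norm_nonneg δ)]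
  have hdescent := add_inner_gradient_sub_le_of_inner_gradient_ge hq Λ _ hslope
  have hδ : ‖δ‖ = ‖gradient q Λ i‖ / L := by
    rw [norm_smul, Real.norm_of_nonneg (by positivity)]
    ring
  rw [inner_single_right, real_inner_smul_right, real_inner_self_eq_norm_sq, hδ] at hdescent
  convert hdescent using 1
  field_simp
  ring

end PiLp

theorem stmt17_general (n : ℕ) (hn : 0 < n) (D : Fin n → ℕ)
    (q : PiLp 2 (fun i : Fin n => EuclideanSpace ℝ (Fin (D i))) → ℝ)
    (L : Fin n → ℝ) (hL : ∀ i, 0 < L i)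
    (hdiff : Differentiable ℝ q)
    (hblock : ∀ (i : Fin n) (Λ : PiLp 2 (fun i : Fin n => EuclideanSpace ℝ (Fin (D i))))
        (δi : EuclideanSpace ℝ (Fin (D i))),
      ‖gradient q (Λ + (WithLp.equiv 2 ((j : Fin n) → EuclideanSpace ℝ (Fin (D j)))).symm
          (Pi.single i δi)) i - gradient q Λ i‖ ≤ L i * ‖δi‖)
    (qstar : ℝ) :
    ∀ Λ : PiLp 2 (fun i : Fin n => EuclideanSpace ℝ (Fin (D i))),
      (1 / n : ℝ) * ∑ i, (qstar -
          q (Λ + (WithLp.equiv 2 ((j : Fin n) → EuclideanSpace ℝ (Fin (D j)))).symm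
              (Pi.single i ((1 / L i) • gradient q Λ i)))) ≤
        (qstar - q Λ) - (1 / (2 * n) : ℝ) * ∑ i, (1 / L i) * ‖gradient q Λ i‖ ^ 2 := by
  intro Λ
  have hstep : ∀ i, q Λ + ‖gradient q Λ i‖ ^ 2 / (2 * L i) ≤
      q (Λ + (WithLp.equiv 2 ((j : Fin n) → EuclideanSpace ℝ (Fin (D j)))).symm
        (Pi.single i ((1 / L i) • gradient q Λ i))) := fun i =>
    PiLp.add_norm_sq_div_le_apply_add_single_gradient hdiff (hL i) (hblock i) Λ
  have hn' : (n : ℝ) ≠ 0 := by positivity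
  calc (1 / n : ℝ) * ∑ i, (qstar -
          q (Λ + (WithLp.equiv 2 ((j : Fin n) → EuclideanSpace ℝ (Fin (D j)))).symm
              (Pi.single i ((1 / L i) • gradient q Λ i))))
      ≤ (1 / n : ℝ) * ∑ i, ((qstar - q Λ) - ‖gradient q Λ i‖ ^ 2 / (2 * L i)) := by
        refine mul_le_mul_of_nonneg_left (Finset.sum_le_sum fun i _ => ?_) (by positivity)
        linarith [hstep i]
    _ = (qstar - q Λ) - (1 / (2 * n) : ℝ) * ∑ i, (1 / L i) * ‖gradient q Λ i‖ ^ 2 := by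
        have hhalf : ∑ i, ‖gradient q Λ i‖ ^ 2 / (2 * L i) =
            (∑ i, (1 / L i) * ‖gradient q Λ i‖ ^ 2) / 2 := by
          rw [Finset.sum_div]
          congr! 1 with i
          ring
        rw [Finset.sum_sub_distrib, hhalf, Finset.sum_const, Finset.card_univ, Fintype.card_fin,
          nsmul_eq_mul]
        field_simp

theorem stmt17 (n : ℕ) (hn : 0 < n) (D : Fin n → ℕ)
    (q : PiLp 2 (fun i : Fin n => EuclideanSpace ℝ (Fin (D i))) → ℝ)
    (L : Fin n → ℝ) (hL : ∀ i, 0 < L i)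
    (hconc : ConcaveOn ℝ Set.univ q) (hdiff : Differentiable ℝ q)
    (hblock : ∀ (i : Fin n) (Λ : PiLp 2 (fun i : Fin n => EuclideanSpace ℝ (Fin (D i))))
        (δi : EuclideanSpace ℝ (Fin (D i))),
      ‖gradient q (Λ + (WithLp.equiv 2 ((j : Fin n) → EuclideanSpace ℝ (Fin (D j)))).symm
          (Pi.single i δi)) i - gradient q Λ i‖ ≤ L i * ‖δi‖)
    (qstar : ℝ) (Λstar : PiLp 2 (fun i : Fin n => EuclideanSpace ℝ (Fin (D i))))
    (hmax : ∀ y, q y ≤ q Λstar) (hq : qstar = q Λstar) :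
    ∀ Λ : PiLp 2 (fun i : Fin n => EuclideanSpace ℝ (Fin (D i))),
      (1 / n : ℝ) * ∑ i, (qstar -
          q (Λ + (WithLp.equiv 2 ((j : Fin n) → EuclideanSpace ℝ (Fin (D j)))).symm
              (Pi.single i ((1 / L i) • gradient q Λ i)))) ≤
        (qstar - q Λ) - (1 / (2 * n) : ℝ) * ∑ i, (1 / L i) * ‖gradient q Λ i‖ ^ 2 :=
  stmt17_general n hn D q L hL hdiff hblock qstar
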